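/- In any conditional logic containing classical propositional logic and the axioms AC ((φ>ψ)∧(φ>χ)→(φ∧ψ>χ)) and RT ((φ>ψ)∧(ψ∧φ>χ)→(φ>χ)), the axiom CSO is derivable: ⊢ (φ>ψ)∧(ψ>φ) → ((φ>χ) ↔ (ψ>χ)). -/
import Mathlib


inductive Form where
  | var : Nat → Form
  | bot : Form
  | neg : Form → Form
  | conj : Form → Form → Form
  | disj : Form → Form → Form
  | imp : Form → Form → Form
  | cond : Form → Form → Form

def Form.iff (p q : Form) : Form := Form.conj (Form.imp p q) (Form.imp q p)

/-- A boolean valuation respecting the classical connectives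
(conditional subformulas are treated as atoms). -/
def ClassVal (v : Form → Bool) : Prop :=
  v Form.bot = false ∧
  (∀ p, v (Form.neg p) = ! v p) ∧
  (∀ p q, v (Form.conj p q) = (v p && v q)) ∧
  (∀ p q, v (Form.disj p q) = (v p || v q)) ∧
  (∀ p q, v (Form.imp p q) = (! v p || v q))

/-- Classical tautologies. -/
def IsTaut (p : Form) : Prop := ∀ v, ClassVal v → v p = true

inductive Der : Form → Prop where
  | taut : ∀ p, IsTaut p → Der p
  | mp : ∀ p q, Der (Form.imp p q) → Der p → Der q
  | ac : ∀ p q r, Der (Form.imp (Form.conj (Form.cond p q) (Form.cond p r))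
      (Form.cond (Form.conj p q) r))
  | rt : ∀ p q r, Der (Form.imp (Form.conj (Form.cond p q) (Form.cond (Form.conj q p) r))
      (Form.cond p r))

/-- CSO is derivable from PC, AC and RT. -/
theorem cso_derivable (p q r : Form) :
    Der (Form.imp (Form.conj (Form.cond p q) (Form.cond q p))
      (Form.iff (Form.cond p r) (Form.cond q r))) := by
  set A := Form.cond p q
  set B := Form.cond q p
  set C := Form.cond p r
  set D := Form.cond q r
  set E := Form.cond (Form.conj p q) r
  set F := Form.cond (Form.conj q p) r
  have ac1 : Der (Form.imp (Form.conj A C) E) := Der.ac p q r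
  have rt1 : Der (Form.imp (Form.conj B E) D) := Der.rt q p r
  have ac2 : Der (Form.imp (Form.conj B D) F) := Der.ac q p r
  have rt2 : Der (Form.imp (Form.conj A F) C) := Der.rt p q r
  have taut : Der (Form.imp (Form.imp (Form.conj A C) E)
      (Form.imp (Form.imp (Form.conj B E) D)
        (Form.imp (Form.imp (Form.conj B D) F)
          (Form.imp (Form.imp (Form.conj A F) C)
            (Form.imp (Form.conj A B) (Form.iff C D)))))) := by
    apply Der.taut
    intro v hv
    obtain ⟨h1, h2, h3, h4, h5⟩ := hv
    simp only [Form.iff, h3, h5]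
    cases v A <;> cases v B <;> cases v C <;> cases v D <;> cases v E <;> cases v F <;> rfl
  exact Der.mp _ _ (Der.mp _ _ (Der.mp _ _ (Der.mp _ _ taut ac1) rt1) ac2) rt2
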